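/- arXiv:1212.2714 — 3 statements merged into one kernel-verified Lean document; each statement's English description precedes it below -/
import Mathlib

section
/- Assume 0 < E[X₂²] < ∞ and assumption (A1). Then there exist c₉>0 and s_*>0 such that, for all λ∈(1/2,1) and all θ₁ with 0<|θ₁|≤s_*, | b̃_λ(θ₁)/√(ã_λ²(θ₁)+b̃_λ²(θ₁)) − λc₂|θ₁|^α(θ₁/|θ₁|)/(√2·Q_λ(|θ₁|^α)) | ≤ c₉|θ₁|^ε, where Q_λ(s) = { (1−λ+λc₁s)² + (λc₂s)² + (1−λ+λc₁s)√((1−λ+λc₁s)²+(λc₂s)²) }^{1/2}. -/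
/-!
Both quantities are values of `σ(z) = sin (arg z / 2) = Im z / |z + |z||`: the ratio
`b̃_λ / √(ã_λ² + b̃_λ²)` is `σ(z)` for `z = 1 - λ + λB(θ₁) + iλD(θ₁)`, and the main term is `σ(w)`
for `w = 1 - λ + λc₁|θ₁|^α + iλc₂|θ₁|^α sgn θ₁`. Normalising `z + |z|` to a unit vector is
Lipschitz away from `0`, which gives `|σ(z) - σ(w)| ≤ 4|z - w|/|w|` when `Re w ≥ 0`. By (A1),
`|z - w| ≤ λC|θ₁|^(α+ε)` for some constant `C`, while `|w| ≥ λc₁|θ₁|^α`.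
-/

open MeasureTheory ProbabilityTheory Filter Set Asymptotics

noncomputable section

variable {Ω : Type*} [MeasurableSpace Ω]

/-- `E[X₂²]`. -/
def EX2sq (P : Measure Ω) (X : ℕ → Ω → ℤ × ℤ) : ℝ := ∫ ω, ((X 0 ω).2 : ℝ) ^ 2 ∂P

/-- `E[cos (θ X₁)]`. -/
def EcosX1 (P : Measure Ω) (X : ℕ → Ω → ℤ × ℤ) (θ : ℝ) : ℝ :=
  ∫ ω, Real.cos (θ * ((X 0 ω).1 : ℝ)) ∂P

/-- `E[sin (θ X₁)]`. -/
def EsinX1 (P : Measure Ω) (X : ℕ → Ω → ℤ × ℤ) (θ : ℝ) : ℝ :=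
  ∫ ω, Real.sin (θ * ((X 0 ω).1 : ℝ)) ∂P

/-- `E[(sin (θ X₁)) X₂]`. -/
def EsinX1X2 (P : Measure Ω) (X : ℕ → Ω → ℤ × ℤ) (θ : ℝ) : ℝ :=
  ∫ ω, Real.sin (θ * ((X 0 ω).1 : ℝ)) * ((X 0 ω).2 : ℝ) ∂P

/-- `E[(-1 + cos (θ X₁)) X₂]`. -/
def Ecosm1X2 (P : Measure Ω) (X : ℕ → Ω → ℤ × ℤ) (θ : ℝ) : ℝ :=
  ∫ ω, (-1 + Real.cos (θ * ((X 0 ω).1 : ℝ))) * ((X 0 ω).2 : ℝ) ∂P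

/-- The function `B(θ₁)` of the paper. -/
def Bfun (P : Measure Ω) (X : ℕ → Ω → ℤ × ℤ) (θ : ℝ) : ℝ :=
  1 - EcosX1 P X θ - EsinX1X2 P X θ ^ 2 / (2 * EX2sq P X)
    + Ecosm1X2 P X θ ^ 2 / (2 * EX2sq P X)

/-- The function `D(θ₁)` of the paper. -/
def Dfun (P : Measure Ω) (X : ℕ → Ω → ℤ × ℤ) (θ : ℝ) : ℝ :=
  EsinX1 P X θ - EsinX1X2 P X θ * Ecosm1X2 P X θ / EX2sq P X

/-- `A = E[(sin θ₁X₁)X₂] / ((1/2)E[X₂²])`. -/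
def Acoef (P : Measure Ω) (X : ℕ → Ω → ℤ × ℤ) (θ : ℝ) : ℝ :=
  EsinX1X2 P X θ / ((1 / 2) * EX2sq P X)

/-- `B = (1 - λE[cos θ₁X₁]) / ((λ/2)E[X₂²])`. -/
def Bcoef (P : Measure Ω) (X : ℕ → Ω → ℤ × ℤ) (lam θ : ℝ) : ℝ :=
  (1 - lam * EcosX1 P X θ) / ((lam / 2) * EX2sq P X)

/-- `C = E[(-1 + cos θ₁X₁)X₂] / ((1/2)E[X₂²])`. -/
def Ccoef (P : Measure Ω) (X : ℕ → Ω → ℤ × ℤ) (θ : ℝ) : ℝ :=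
  Ecosm1X2 P X θ / ((1 / 2) * EX2sq P X)

/-- `D = E[sin θ₁X₁] / ((1/2)E[X₂²])`. -/
def Dcoef (P : Measure Ω) (X : ℕ → Ω → ℤ × ℤ) (θ : ℝ) : ℝ :=
  EsinX1 P X θ / ((1 / 2) * EX2sq P X)

/-- `K = (4B - A² + C²)² + 4(2D - AC)²`. -/
def Kcoef (P : Measure Ω) (X : ℕ → Ω → ℤ × ℤ) (lam θ : ℝ) : ℝ :=
  (4 * Bcoef P X lam θ - Acoef P X θ ^ 2 + Ccoef P X θ ^ 2) ^ 2
    + 4 * (2 * Dcoef P X θ - Acoef P X θ * Ccoef P X θ) ^ 2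

/-- `ã_λ(θ₁) = (√2/(λE[X₂²]√K))·√(4B - A² + C² + √K)`. -/
def atil (P : Measure Ω) (X : ℕ → Ω → ℤ × ℤ) (lam θ : ℝ) : ℝ :=
  Real.sqrt 2 / (lam * EX2sq P X * Real.sqrt (Kcoef P X lam θ)) *
    Real.sqrt (4 * Bcoef P X lam θ - Acoef P X θ ^ 2 + Ccoef P X θ ^ 2
      + Real.sqrt (Kcoef P X lam θ))

/-- `b̃_λ(θ₁) = (√2/(λE[X₂²]√K))·2(2D - AC)/√(4B - A² + C² + √K)`. -/
def btil (P : Measure Ω) (X : ℕ → Ω → ℤ × ℤ) (lam θ : ℝ) : ℝ :=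
  Real.sqrt 2 / (lam * EX2sq P X * Real.sqrt (Kcoef P X lam θ)) *
    (2 * (2 * Dcoef P X θ - Acoef P X θ * Ccoef P X θ) /
      Real.sqrt (4 * Bcoef P X lam θ - Acoef P X θ ^ 2 + Ccoef P X θ ^ 2
        + Real.sqrt (Kcoef P X lam θ)))

/-- `Q_λ(s)` of the paper. -/
def Qlam (c₁ c₂ lam s : ℝ) : ℝ :=
  Real.sqrt ((1 - lam + lam * c₁ * s) ^ 2 + (lam * c₂ * s) ^ 2
    + (1 - lam + lam * c₁ * s) *
      Real.sqrt ((1 - lam + lam * c₁ * s) ^ 2 + (lam * c₂ * s) ^ 2))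

theorem NormedSpace.norm_normalize_sub_normalize_le {V : Type*} [NormedAddCommGroup V]
    [NormedSpace ℝ V] (x : V) {y : V} (hy : y ≠ 0) :
    ‖normalize x - normalize y‖ ≤ 2 * ‖x - y‖ / ‖y‖ := by
  have hy' : 0 < ‖y‖ := norm_pos_iff.mpr hy
  rcases eq_or_ne x 0 with rfl | hx
  · rw [normalize_zero_eq_zero, zero_sub, norm_neg, norm_normalize hy, zero_sub, norm_neg,
      mul_div_assoc, div_self hy'.ne']
    norm_num
  have hx' : 0 < ‖x‖ := norm_pos_iff.mpr hx
  have hsplit : normalize x - normalize y =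
      ‖y‖⁻¹ • (x - y) + ((‖y‖ - ‖x‖) / ‖y‖) • normalize x := by
    simp only [normalize]
    match_scalars
    · field_simp
      ring
    · field_simp
  calc ‖normalize x - normalize y‖
      ≤ ‖y‖⁻¹ * ‖x - y‖ + |‖y‖ - ‖x‖| / ‖y‖ := by
        rw [hsplit]
        refine (norm_add_le _ _).trans_eq ?_
        rw [norm_smul, norm_smul, norm_normalize hx, Real.norm_of_nonneg (by positivity),
          Real.norm_eq_abs, abs_div, abs_of_pos hy', mul_one]
    _ ≤ ‖y‖⁻¹ * ‖x - y‖ + ‖x - y‖ / ‖y‖ := by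
        gcongr
        rw [abs_sub_comm]
        exact abs_norm_sub_norm_le x y
    _ = 2 * ‖x - y‖ / ‖y‖ := by ring

/-- `sin (arg z / 2)`: the vector `z + ‖z‖` bisects the angle between `1` and `z`. -/
def sinHalfArg (z : ℂ) : ℝ := (NormedSpace.normalize (z + ‖z‖)).im

theorem sinHalfArg_eq_im_div (z : ℂ) : sinHalfArg z = z.im / ‖z + ‖z‖‖ := by
  rw [sinHalfArg, NormedSpace.normalize, Complex.smul_im, Complex.add_im, Complex.ofReal_im,
    add_zero, smul_eq_mul, div_eq_inv_mul]

theorem sinHalfArg_mk (β m : ℝ) :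
    sinHalfArg ⟨β, m⟩ = m / (√2 * √(β ^ 2 + m ^ 2 + β * √(β ^ 2 + m ^ 2))) := by
  have hr : ‖(⟨β, m⟩ : ℂ)‖ = √(β ^ 2 + m ^ 2) := by
    rw [Complex.norm_def, Complex.normSq_mk]; ring_nf
  rw [sinHalfArg_eq_im_div, hr, ← Real.sqrt_mul zero_le_two, Complex.norm_def,
    Complex.normSq_apply]
  have hr2 := Real.sq_sqrt (add_nonneg (sq_nonneg β) (sq_nonneg m))
  congr 2
  simp only [Complex.add_re, Complex.add_im, Complex.ofReal_re, Complex.ofReal_im]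
  linear_combination hr2

theorem abs_sinHalfArg_sub_le (z : ℂ) {w : ℂ} (hw : 0 ≤ w.re) (hw₀ : w ≠ 0) :
    |sinHalfArg z - sinHalfArg w| ≤ 4 * ‖z - w‖ / ‖w‖ := by
  have hw' : 0 < ‖w‖ := norm_pos_iff.mpr hw₀
  have hwb : ‖w‖ ≤ ‖w + ‖w‖‖ :=
    calc ‖w‖ ≤ (w + ‖w‖).re := by simp [hw]
      _ ≤ ‖w + ‖w‖‖ := Complex.re_le_norm _
  have hb₀ : w + ‖w‖ ≠ 0 := norm_pos_iff.mp (hw'.trans_le hwb)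
  have hab : ‖(z + ‖z‖) - (w + ‖w‖)‖ ≤ 2 * ‖z - w‖ :=
    calc ‖(z + ‖z‖) - (w + ‖w‖)‖ = ‖(z - w) + ((‖z‖ - ‖w‖ : ℝ) : ℂ)‖ := by push_cast; ring_nf
      _ ≤ ‖z - w‖ + |‖z‖ - ‖w‖| := by
        refine (norm_add_le _ _).trans_eq ?_
        rw [Complex.norm_real, Real.norm_eq_abs]
      _ ≤ 2 * ‖z - w‖ := by linarith [abs_norm_sub_norm_le z w]
  calc |sinHalfArg z - sinHalfArg w|
      ≤ ‖NormedSpace.normalize (z + ‖z‖) - NormedSpace.normalize (w + ‖w‖)‖ :=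
        by rw [sinHalfArg, sinHalfArg, ← Complex.sub_im]; exact Complex.abs_im_le_norm _
    _ ≤ 2 * ‖(z + ‖z‖) - (w + ‖w‖)‖ / ‖w + ‖w‖‖ :=
        NormedSpace.norm_normalize_sub_normalize_le _ hb₀
    _ ≤ 2 * (2 * ‖z - w‖) / ‖w‖ := by gcongr
    _ = 4 * ‖z - w‖ / ‖w‖ := by ring

theorem mul_div_sqrt_div_sqrt_sq_add_sq {k S b : ℝ} (hk : 0 < k) (hS : 0 < S) :
    k * (b / √S) / √((k * √S) ^ 2 + (k * (b / √S)) ^ 2) = b / √(S ^ 2 + b ^ 2) := by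
  have hsS : 0 < √S := Real.sqrt_pos.mpr hS
  have hsum : (k * √S) ^ 2 + (k * (b / √S)) ^ 2 = (k / √S) ^ 2 * (S ^ 2 + b ^ 2) := by
    field_simp
    rw [show √S ^ 4 = (√S ^ 2) ^ 2 by ring, Real.sq_sqrt hS.le]
  rw [hsum, Real.sqrt_mul (sq_nonneg _), Real.sqrt_sq (by positivity)]
  field_simp

theorem btil_div_sqrt_eq_sinHalfArg (P : Measure Ω) (X : ℕ → Ω → ℤ × ℤ) {lam : ℝ} (θ : ℝ)
    (hlam : 0 < lam) (hpos : 0 < EX2sq P X) :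
    btil P X lam θ / √(atil P X lam θ ^ 2 + btil P X lam θ ^ 2) =
      sinHalfArg ⟨1 - lam + lam * Bfun P X θ, lam * Dfun P X θ⟩ := by
  set z : ℂ := ⟨1 - lam + lam * Bfun P X θ, lam * Dfun P X θ⟩
  set c := 8 / (lam * EX2sq P X)
  have hc : 0 < c := by positivity
  have hS : 4 * Bcoef P X lam θ - Acoef P X θ ^ 2 + Ccoef P X θ ^ 2 = c * z.re := by
    simp only [Bcoef, Acoef, Ccoef, Bfun, c, z]
    field_simp
    ring
  have hT : 2 * (2 * Dcoef P X θ - Acoef P X θ * Ccoef P X θ) = c * z.im := by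
    simp only [Dcoef, Acoef, Ccoef, Dfun, c, z]
    field_simp
    ring
  have hK : √(Kcoef P X lam θ) = c * ‖z‖ := by
    rw [← Real.sqrt_sq (by positivity : 0 ≤ c * ‖z‖)]
    congr 1
    simp only [Kcoef, hS, mul_pow, Complex.sq_norm, Complex.normSq_apply]
    linear_combination (2 * (2 * Dcoef P X θ - Acoef P X θ * Ccoef P X θ) + c * z.im) * hT
  have hre : c * z.re + c * ‖z‖ = c * (z + ‖z‖).re := by simp [mul_add]
  simp only [atil, btil]
  rw [hS, hT, hK, hre]
  have hre_le := neg_le_of_abs_le (Complex.abs_re_le_norm z)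
  rcases (show 0 ≤ (z + ‖z‖).re by simp only [Complex.add_re, Complex.ofReal_re]; linarith)
    |>.eq_or_lt with hu | hu
  · -- `z ∈ (-∞, 0]`: both sides vanish, the left one through the junk value `x / √0 = 0`
    have him : z.im = 0 := by
      have hnorm := Complex.sq_norm z
      rw [Complex.normSq_apply] at hnorm
      simp only [Complex.add_re, Complex.ofReal_re] at hu
      exact pow_eq_zero_iff two_ne_zero |>.mp <| by linear_combination -hnorm + (z.re - ‖z‖) * hu
    have hzero : z + ‖z‖ = 0 := Complex.ext (by simpa using hu.symm) (by simpa using him)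
    simp [him, sinHalfArg, hzero]
  · have hz : 0 < ‖z‖ := by
      simp only [Complex.add_re, Complex.ofReal_re] at hu
      linarith [Complex.re_le_norm z]
    have ha : ‖z + ‖z‖‖ = √((z + ‖z‖).re ^ 2 + z.im ^ 2) := by
      rw [Complex.norm_def (z + ‖z‖), Complex.normSq_apply (z + ‖z‖)]
      simp only [sq, Complex.add_im, Complex.ofReal_im, add_zero]
    rw [mul_div_sqrt_div_sqrt_sq_add_sq (by positivity) (by positivity), sinHalfArg_eq_im_div, ha,
      mul_pow, mul_pow, ← mul_add, Real.sqrt_mul (sq_nonneg c), Real.sqrt_sq hc.le,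
      mul_div_mul_left _ _ hc.ne']

theorem mul_div_sqrt_two_mul_Qlam_eq_sinHalfArg (c₁ c₂ lam s : ℝ) {σ : ℝ} (hσ : σ ^ 2 = 1) :
    lam * c₂ * s * σ / (√2 * Qlam c₁ c₂ lam s) =
      sinHalfArg ⟨1 - lam + lam * c₁ * s, lam * c₂ * s * σ⟩ := by
  rw [sinHalfArg_mk, Qlam, mul_pow _ σ, hσ, mul_one]

open Topology in
theorem Asymptotics.IsBigO.exists_bound_abs_add_abs_punctured {f g h : ℝ → ℝ}
    (hf : f =O[𝓝[≠] 0] h) (hg : g =O[𝓝[≠] 0] h) :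
    ∃ C > 0, ∃ δ > 0, ∀ x, 0 < |x| → |x| ≤ δ → |f x| + |g x| ≤ C * |h x| := by
  obtain ⟨C, hC, hCf⟩ := (hf.norm_left.add hg.norm_left).exists_pos
  obtain ⟨δ, hδ, hδf⟩ := Metric.eventually_nhds_iff.mp (eventually_nhdsWithin_iff.mp hCf.bound)
  refine ⟨C, hC, δ / 2, half_pos hδ, fun x hx hxδ => ?_⟩
  have hx' := hδf (by rw [Real.dist_0_eq_abs]; linarith) (abs_pos.mp hx)
  rwa [Real.norm_eq_abs, Real.norm_eq_abs, abs_of_nonneg (by positivity)] at hx'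

theorem btil_ratio_approx_general
    (P : Measure Ω) (X : ℕ → Ω → ℤ × ℤ)
    (hpos : 0 < EX2sq P X)
    (α ε c₁ c₂ : ℝ) (hc₁ : 0 < c₁)
    (hA1B : (fun θ : ℝ => Bfun P X θ - c₁ * |θ| ^ α) =O[nhdsWithin (0 : ℝ) {0}ᶜ]
      fun θ : ℝ => |θ| ^ (α + ε))
    (hA1D : (fun θ : ℝ => Dfun P X θ - c₂ * |θ| ^ α * (θ / |θ|)) =O[nhdsWithin (0 : ℝ) {0}ᶜ]
      fun θ : ℝ => |θ| ^ (α + ε))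
    :
    ∃ c₉ : ℝ, 0 < c₉ ∧ ∃ sS : ℝ, 0 < sS ∧
      ∀ lam ∈ Set.Ioo (1 / 2 : ℝ) 1, ∀ θ₁ : ℝ, 0 < |θ₁| → |θ₁| ≤ sS →
        |btil P X lam θ₁ / Real.sqrt (atil P X lam θ₁ ^ 2 + btil P X lam θ₁ ^ 2) -
            lam * c₂ * |θ₁| ^ α * (θ₁ / |θ₁|) / (Real.sqrt 2 * Qlam c₁ c₂ lam (|θ₁| ^ α))| ≤
          c₉ * |θ₁| ^ ε := by
  obtain ⟨C, hC, δ, hδ, hA1⟩ := hA1B.exists_bound_abs_add_abs_punctured hA1D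
  refine ⟨4 * C / c₁, by positivity, δ, hδ, fun lam ⟨hlam₀, hlam₁⟩ θ hθ hθδ => ?_⟩
  have hlam : 0 < lam := by linarith
  set s := |θ| ^ α
  have hs : 0 < s := Real.rpow_pos_of_pos hθ α
  have hσ : (θ / |θ|) ^ 2 = 1 := by rw [div_pow, sq_abs, div_self (pow_ne_zero 2 (abs_pos.mp hθ))]
  rw [btil_div_sqrt_eq_sinHalfArg P X θ hlam hpos,
    mul_div_sqrt_two_mul_Qlam_eq_sinHalfArg c₁ c₂ lam s hσ]
  set z : ℂ := ⟨1 - lam + lam * Bfun P X θ, lam * Dfun P X θ⟩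
  set w : ℂ := ⟨1 - lam + lam * c₁ * s, lam * c₂ * s * (θ / |θ|)⟩
  have hw : lam * c₁ * s ≤ w.re := by simp only [w]; linarith
  have hlcs : 0 < lam * c₁ * s := mul_pos (mul_pos hlam hc₁) hs
  have hzw : ‖z - w‖ ≤ lam * (C * (s * |θ| ^ ε)) := by
    have hA1θ := hA1 θ hθ hθδ
    rw [abs_of_nonneg (Real.rpow_nonneg hθ.le _), Real.rpow_add hθ] at hA1θ
    calc ‖z - w‖ ≤ |(z - w).re| + |(z - w).im| := Complex.norm_le_abs_re_add_abs_im _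
      _ = |lam * (Bfun P X θ - c₁ * s)| + |lam * (Dfun P X θ - c₂ * s * (θ / |θ|))| := by
        congr 2 <;> simp only [z, w, Complex.sub_re, Complex.sub_im] <;> ring
      _ ≤ lam * (C * (s * |θ| ^ ε)) := by
        rw [abs_mul, abs_mul, abs_of_pos hlam, ← mul_add]
        gcongr
  calc |sinHalfArg z - sinHalfArg w| ≤ 4 * ‖z - w‖ / ‖w‖ :=
        abs_sinHalfArg_sub_le z (hlcs.le.trans hw) fun h => by simp [h] at hw; linarith
    _ ≤ 4 * (lam * (C * (s * |θ| ^ ε))) / (lam * c₁ * s) := by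
        gcongr
        exact hw.trans (Complex.re_le_norm w)
    _ = 4 * C / c₁ * |θ| ^ ε := by field_simp

/-- Lemma 4.1: assuming `0 < E[X₂²] < ∞` and (A1),
`b̃_λ/√(ã_λ² + b̃_λ²)` is within `c₉|θ₁|^ε` of
`λc₂|θ₁|^α (θ₁/|θ₁|)/(√2 Q_λ(|θ₁|^α))`. -/
theorem btil_ratio_approx
    (P : Measure Ω) [IsProbabilityMeasure P] (X : ℕ → Ω → ℤ × ℤ)
    (hX2sq : Integrable (fun ω => ((X 0 ω).2 : ℝ) ^ 2) P)
    (hpos : 0 < EX2sq P X)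
    (α ε c₁ c₂ : ℝ) (hα : α ∈ Set.Ioc (0 : ℝ) 2) (hε : 0 < ε) (hc₁ : 0 < c₁) (hc₂ : 0 < c₂)
    (hA1B : (fun θ : ℝ => Bfun P X θ - c₁ * |θ| ^ α) =O[nhdsWithin (0 : ℝ) {0}ᶜ]
      fun θ : ℝ => |θ| ^ (α + ε))
    (hA1D : (fun θ : ℝ => Dfun P X θ - c₂ * |θ| ^ α * (θ / |θ|)) =O[nhdsWithin (0 : ℝ) {0}ᶜ]
      fun θ : ℝ => |θ| ^ (α + ε))
    :
    ∃ c₉ : ℝ, 0 < c₉ ∧ ∃ sS : ℝ, 0 < sS ∧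
      ∀ lam ∈ Set.Ioo (1 / 2 : ℝ) 1, ∀ θ₁ : ℝ, 0 < |θ₁| → |θ₁| ≤ sS →
        |btil P X lam θ₁ / Real.sqrt (atil P X lam θ₁ ^ 2 + btil P X lam θ₁ ^ 2) -
            lam * c₂ * |θ₁| ^ α * (θ₁ / |θ₁|) / (Real.sqrt 2 * Qlam c₁ c₂ lam (|θ₁| ^ α))| ≤
          c₉ * |θ₁| ^ ε :=
  btil_ratio_approx_general P X hpos α ε c₁ c₂ hc₁ hA1B hA1D

end
end

section
/- Let A, B, C, D be real numbers with 4B−A²−C² > 0 and 2D−AC ≠ 0. Set K=(4B−A²+C²)²+4(2D−AC)², H=(1/2)(−4B+A²−C²+√K), a_± = A ± √H, and b_± = (1/4){A²+C²+√K ± (2AH−2C(2D−AC))/√H}. Then H > 0, 4b₊ − a₊² > 0, 4b₋ − a₋² > 0, and for every real t, (t²+At+B)² + (Ct+D)² = (t²+a₊t+b₊)(t²+a₋t+b₋). -/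
/-!
Over `ℂ` the quartic is `Q(t) · conj Q(t)` with `Q(t) = t² + (A + iC)t + (B + iD)`, hence the
product of the two real quadratics `(t - r)(t - r̄)`, `r` running over the roots of `Q`. If
`s - iu` is a square root of the discriminant of `Q`, i.e. `u² - s² = 4B - A² + C²` and
`su = 2D - AC`, these quadratics are `t² + (A ± s)t + ((A ± s)² + (C ∓ u)²)/4`, of
discriminant `-(C ∓ u)²`. The number `H` is `s²`: it is the positive root of
`H (H + 4B - A² + C²) = (2D - AC)²`. Finally `4B - A² - C² > 0` gives `u² > C²`, so neither
`C - u` nor `C + u` vanishes.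
-/

theorem quartic_eq_mul_quadratics {k : Type*} [Field k] [CharZero k] {A B C D s u : k}
    (hE : u ^ 2 - s ^ 2 = 4 * B - A ^ 2 + C ^ 2) (hF : s * u = 2 * D - A * C) (t : k) :
    (t ^ 2 + A * t + B) ^ 2 + (C * t + D) ^ 2 =
      (t ^ 2 + (A + s) * t + ((A + s) ^ 2 + (C - u) ^ 2) / 4) *
        (t ^ 2 + (A - s) * t + ((A - s) ^ 2 + (C + u) ^ 2) / 4) := by
  linear_combination
    (-(t ^ 2 / 2) - A * t / 2 - (A ^ 2 - C ^ 2 + u ^ 2 - s ^ 2 + 4 * B) / 16) * hE +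
      (-(C * t) - (2 * A * C + 2 * s * u + 4 * D) / 8) * hF

theorem mul_add_eq_sq_of_two_mul_eq_sqrt_sub {E F H : ℝ}
    (hH : 2 * H = √(E ^ 2 + 4 * F ^ 2) - E) : H * (H + E) = F ^ 2 := by
  have hK : √(E ^ 2 + 4 * F ^ 2) ^ 2 = E ^ 2 + 4 * F ^ 2 := Real.sq_sqrt (by positivity)
  linear_combination (1 / 4) * hK + (1 / 4) * (2 * H + E + √(E ^ 2 + 4 * F ^ 2)) * hH

theorem pos_of_two_mul_eq_sqrt_sub {E F H : ℝ} (hF : F ≠ 0)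
    (hH : 2 * H = √(E ^ 2 + 4 * F ^ 2) - E) : 0 < H := by
  have hE : E < √(E ^ 2 + 4 * F ^ 2) :=
    calc E ≤ |E| := le_abs_self E
      _ = √(E ^ 2) := (Real.sqrt_sq_eq_abs E).symm
      _ < √(E ^ 2 + 4 * F ^ 2) :=
        Real.sqrt_lt_sqrt (sq_nonneg E) (lt_add_of_pos_right _ (by positivity))
  linarith

/-- The quartic `(t² + At + B)² + (Ct + D)²` factors as the product of the two quadratics
`t² + a₊t + b₊` and `t² + a₋t + b₋`, which have negative discriminants. -/
theorem quartic_factorization (A B C D K H ap am bp bm : ℝ)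
    (hK : K = (4 * B - A ^ 2 + C ^ 2) ^ 2 + 4 * (2 * D - A * C) ^ 2)
    (hH : H = (1 / 2) * (-(4 * B) + A ^ 2 - C ^ 2 + Real.sqrt K))
    (hap : ap = A + Real.sqrt H) (ham : am = A - Real.sqrt H)
    (hbp : bp = (1 / 4) * (A ^ 2 + C ^ 2 + Real.sqrt K +
      (2 * A * H - 2 * C * (2 * D - A * C)) / Real.sqrt H))
    (hbm : bm = (1 / 4) * (A ^ 2 + C ^ 2 + Real.sqrt K -
      (2 * A * H - 2 * C * (2 * D - A * C)) / Real.sqrt H))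
    (hpos : 0 < 4 * B - A ^ 2 - C ^ 2) (hne : 2 * D - A * C ≠ 0) :
    0 < H ∧ 0 < 4 * bp - ap ^ 2 ∧ 0 < 4 * bm - am ^ 2 ∧
      ∀ t : ℝ, (t ^ 2 + A * t + B) ^ 2 + (C * t + D) ^ 2 =
        (t ^ 2 + ap * t + bp) * (t ^ 2 + am * t + bm) := by
  set E := 4 * B - A ^ 2 + C ^ 2
  set F := 2 * D - A * C
  have hH2 : 2 * H = √(E ^ 2 + 4 * F ^ 2) - E := by rw [hH, ← hK]; ring
  have hH0 : 0 < H := pos_of_two_mul_eq_sqrt_sub hne hH2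
  have hHF := mul_add_eq_sq_of_two_mul_eq_sqrt_sub hH2
  set s := √H
  have hs : 0 < s := Real.sqrt_pos.2 hH0
  have hsH : s ^ 2 = H := Real.sq_sqrt hH0.le
  set u := F / s
  have hsu : s * u = F := mul_div_cancel₀ _ hs.ne'
  have hE : u ^ 2 - s ^ 2 = E := by
    have hu : u ^ 2 = H + E := by
      rw [div_pow, hsH, ← hHF, mul_div_cancel_left₀ _ hH0.ne']
    linarith
  have hK' : √K = 2 * H + E := by linarith
  have hG : (2 * A * H - 2 * C * F) / s = 2 * A * s - 2 * C * u := by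
    rw [← hsH, ← hsu]; field_simp
  have hbp' : bp = ((A + s) ^ 2 + (C - u) ^ 2) / 4 := by
    rw [hbp, hK', hG]; linear_combination (-1 / 4) * hE - (1 / 2) * hsH
  have hbm' : bm = ((A - s) ^ 2 + (C + u) ^ 2) / 4 := by
    rw [hbm, hK', hG]; linear_combination (-1 / 4) * hE - (1 / 2) * hsH
  have hCu : C ^ 2 < u ^ 2 := by linarith [sq_nonneg s, sq_nonneg C]
  have hCu₁ : C - u ≠ 0 := fun h => hCu.ne (by rw [sub_eq_zero.1 h])
  have hCu₂ : C + u ≠ 0 := fun h => hCu.ne (by rw [eq_neg_of_add_eq_zero_left h, neg_sq])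
  refine ⟨hH0, ?_, ?_, fun t => ?_⟩
  · rw [hbp', hap]; linarith [sq_pos_of_ne_zero hCu₁]
  · rw [hbm', ham]; linarith [sq_pos_of_ne_zero hCu₂]
  · rw [hap, ham, hbp', hbm']; exact quartic_eq_mul_quadratics hE hsu t
end

section
/- Let c₁>0, c₂>0, a>0, and for λ∈(0,1) define Q_λ^{(1)}(s) = { λ²(c₁²+c₂²+c₁√(c₁²+c₂²))s² + (1−λ)λ(3c₁+√(c₁²+c₂²))s + 2(1−λ)² }^{1/2}. Then there exists a constant c₁₅>0 such that, for all λ∈(1/2,1), | (λc₂/√2)·∫₀^{a} (Q_λ^{(1)}(s))^{−1} ds + ( c₂/(√2·√(c₁²+c₂²+c₁√(c₁²+c₂²))) )·log(1−λ) | ≤ c₁₅. -/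
set_option maxHeartbeats 1000000

open MeasureTheory Set

noncomputable section

lemma integral_inv_sqrt_quadratic (α β γ a : ℝ) (hα : 0 < α) (hβ : 0 ≤ β) (hγ : 0 < γ)
    (ha : 0 ≤ a) :
    ∫ s in (0:ℝ)..a, (Real.sqrt (α*s^2+β*s+γ))⁻¹
      = (Real.sqrt α)⁻¹ * (Real.log (2*α*a+β+2*Real.sqrt α*Real.sqrt (α*a^2+β*a+γ))
          - Real.log (β+2*Real.sqrt α*Real.sqrt γ)) := by
  have hsα : 0 < Real.sqrt α := Real.sqrt_pos.mpr hα
  have hm : Real.sqrt α * Real.sqrt α = α := Real.mul_self_sqrt hα.le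
  have hP : ∀ s ∈ Set.Icc (0:ℝ) a, 0 < α*s^2+β*s+γ := by
    intro s hs
    have h0 := hs.1
    nlinarith [sq_nonneg s, mul_nonneg hβ h0]
  have hQ : ∀ s ∈ Set.Icc (0:ℝ) a, 0 < Real.sqrt (α*s^2+β*s+γ) := fun s hs =>
    Real.sqrt_pos.mpr (hP s hs)
  have hG : ∀ s ∈ Set.Icc (0:ℝ) a, 0 < 2*α*s+β+2*Real.sqrt α*Real.sqrt (α*s^2+β*s+γ) := by
    intro s hs
    have h1 : 0 ≤ 2*α*s := mul_nonneg (by positivity) hs.1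
    have h2 := hQ s hs
    nlinarith
  -- FTC
  have hderiv : ∀ s ∈ Set.uIcc (0:ℝ) a,
      HasDerivAt (fun t => (Real.sqrt α)⁻¹ *
        Real.log (2*α*t+β+2*Real.sqrt α*Real.sqrt (α*t^2+β*t+γ)))
        ((Real.sqrt (α*s^2+β*s+γ))⁻¹) s := by
    rw [Set.uIcc_of_le ha]
    intro s hs
    have hPs := hP s hs
    have hQs := hQ s hs
    have hGs := hG s hs
    have hP' : HasDerivAt (fun t => α*t^2+β*t+γ) (2*α*s+β) s := by
      have h : HasDerivAt (fun t : ℝ => α*t^2+β*t+γ) (α*(2*s^(2-1))+β*1) s :=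
        (((hasDerivAt_pow 2 s).const_mul α).add ((hasDerivAt_id s).const_mul β)).add_const γ
      convert h using 1
      simp; ring
    have hQ' : HasDerivAt (fun t => Real.sqrt (α*t^2+β*t+γ))
        ((2*α*s+β) / (2 * Real.sqrt (α*s^2+β*s+γ))) s := hP'.sqrt hPs.ne'
    have hG' : HasDerivAt (fun t => 2*α*t+β+2*Real.sqrt α*Real.sqrt (α*t^2+β*t+γ))
        (2*α + 2*Real.sqrt α * ((2*α*s+β) / (2 * Real.sqrt (α*s^2+β*s+γ)))) s := by
      have h1 : HasDerivAt (fun t : ℝ => 2*α*t+β) (2*α) s := by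
        simpa using ((hasDerivAt_id s).const_mul (2*α)).add_const β
      exact h1.add (hQ'.const_mul (2*Real.sqrt α))
    have hF' := (hG'.log hGs.ne').const_mul (Real.sqrt α)⁻¹
    have key : (Real.sqrt α)⁻¹ *
        ((2*α + 2*Real.sqrt α * ((2*α*s+β) / (2 * Real.sqrt (α*s^2+β*s+γ)))) /
          (2*α*s+β+2*Real.sqrt α*Real.sqrt (α*s^2+β*s+γ)))
        = (Real.sqrt (α*s^2+β*s+γ))⁻¹ := by
      set r := Real.sqrt α with hr
      set q := Real.sqrt (α*s^2+β*s+γ) with hq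
      set g := 2*α*s+β+2*r*q with hg
      have key2 : r*g = 2*α*q + r*(2*α*s+β) := by
        rw [hg]; linear_combination (2*q)*hm
      have h2 : 2*α + 2*r*((2*α*s+β)/(2*q)) = r*g/q := by
        rw [key2]
        field_simp
      rw [h2, div_right_comm, mul_div_cancel_right₀ _ hGs.ne']
      rw [← mul_div_assoc, inv_mul_cancel₀ hsα.ne', one_div]
    rw [← key]
    exact hF'
  have hc : Continuous fun s : ℝ => Real.sqrt (α*s^2+β*s+γ) := by continuity
  have hcont : IntervalIntegrable (fun s => (Real.sqrt (α*s^2+β*s+γ))⁻¹)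
      MeasureTheory.volume 0 a := by
    apply ContinuousOn.intervalIntegrable
    rw [Set.uIcc_of_le ha]
    exact hc.continuousOn.inv₀ (fun s hs => (hQ s hs).ne')
  rw [intervalIntegral.integral_eq_sub_of_hasDerivAt hderiv hcont]
  have h0 : α*0^2+β*0+γ = γ := by ring
  rw [h0]
  ring_nf

/-- Estimate (5.9) of the paper: the logarithmic behaviour of
`(λc₂/√2) ∫₀^a (Q_λ^{(1)}(s))⁻¹ ds` as `λ ↑ 1`. -/
theorem Q1_integral_log_estimate (c₁ c₂ a : ℝ) (hc₁ : 0 < c₁) (hc₂ : 0 < c₂) (ha : 0 < a) :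
    ∃ c₁₅ : ℝ, 0 < c₁₅ ∧ ∀ lam ∈ Set.Ioo (1 / 2 : ℝ) 1,
      |lam * c₂ / Real.sqrt 2 *
          (∫ s in Set.Icc (0 : ℝ) a,
            (Real.sqrt (lam ^ 2 * (c₁ ^ 2 + c₂ ^ 2 + c₁ * Real.sqrt (c₁ ^ 2 + c₂ ^ 2)) * s ^ 2
              + (1 - lam) * lam * (3 * c₁ + Real.sqrt (c₁ ^ 2 + c₂ ^ 2)) * s
              + 2 * (1 - lam) ^ 2))⁻¹) +
        c₂ / (Real.sqrt 2 * Real.sqrt (c₁ ^ 2 + c₂ ^ 2 + c₁ * Real.sqrt (c₁ ^ 2 + c₂ ^ 2))) *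
          Real.log (1 - lam)| ≤ c₁₅ := by
  set A : ℝ := c₁ ^ 2 + c₂ ^ 2 + c₁ * Real.sqrt (c₁ ^ 2 + c₂ ^ 2) with hAdef
  set B : ℝ := 3 * c₁ + Real.sqrt (c₁ ^ 2 + c₂ ^ 2) with hBdef
  have hA : 0 < A := by
    have : 0 ≤ c₁ * Real.sqrt (c₁ ^ 2 + c₂ ^ 2) := by positivity
    nlinarith [sq_nonneg c₁, sq_nonneg c₂]
  have hB : 0 < B := by
    have : 0 ≤ Real.sqrt (c₁ ^ 2 + c₂ ^ 2) := Real.sqrt_nonneg _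
    nlinarith
  have hsA : 0 < Real.sqrt A := Real.sqrt_pos.mpr hA
  have hs2 : 0 < Real.sqrt 2 := by positivity
  set K : ℝ := c₂ / (Real.sqrt 2 * Real.sqrt A) with hKdef
  have hK : 0 < K := by positivity
  set E : ℝ := B + 2 * Real.sqrt 2 * Real.sqrt A with hEdef
  have hE : 0 < E := by positivity
  set Nhi : ℝ := 2 * A * a + B / 2
      + 2 * Real.sqrt A * Real.sqrt (A * a ^ 2 + B * a / 2 + 1 / 2) with hNhidef
  have hNhi : 0 < Nhi := by positivity
  clear_value A B K E Nhi
  set m : ℝ := Real.log (A * a / 2) - Real.log E with hmdef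
  set M : ℝ := Real.log Nhi + Real.log 2 - Real.log E with hMdef
  clear_value m M
  have hc15 : 0 < K * (|M| + |m|) + 1 := by
    have h := mul_nonneg hK.le (add_nonneg (abs_nonneg M) (abs_nonneg m))
    linarith
  refine ⟨K * (|M| + |m|) + 1, hc15, ?_⟩
  intro lam hlam
  obtain ⟨hl1, hl2⟩ := hlam
  have hlam0 : 0 < lam := by linarith
  have hε : 0 < 1 - lam := by linarith
  have hε2 : 1 - lam < 1 / 2 := by linarith
  have hsq1 : (0:ℝ) ≤ lam ^ 2 - 1/4 := by nlinarith
  have hsq2 : (0:ℝ) ≤ 1 - lam ^ 2 := by nlinarith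
  have hll : (1 - lam) * lam ≤ 1/2 := by nlinarith
  -- abbreviate coefficients
  set α : ℝ := lam ^ 2 * A with hαdef
  set β : ℝ := (1 - lam) * lam * B with hβdef
  set γ : ℝ := 2 * (1 - lam) ^ 2 with hγdef
  have hα : 0 < α := by positivity
  have hβ : 0 ≤ β := by positivity
  have hγ : 0 < γ := by positivity
  clear_value α β γ
  have hsqα : Real.sqrt α = lam * Real.sqrt A := by
    rw [hαdef, Real.sqrt_mul (by positivity), Real.sqrt_sq hlam0.le]
  have hsqγ : Real.sqrt γ = Real.sqrt 2 * (1 - lam) := by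
    rw [hγdef, Real.sqrt_mul (by norm_num), Real.sqrt_sq hε.le]
  -- set integral = interval integral
  have hint : (∫ s in Set.Icc (0 : ℝ) a, (Real.sqrt (α * s ^ 2 + β * s + γ))⁻¹)
      = ∫ s in (0:ℝ)..a, (Real.sqrt (α * s ^ 2 + β * s + γ))⁻¹ := by
    rw [MeasureTheory.integral_Icc_eq_integral_Ioc, intervalIntegral.integral_of_le ha.le]
  rw [hint, integral_inv_sqrt_quadratic α β γ a hα hβ hγ ha.le]
  clear hint
  have hden : β + 2 * Real.sqrt α * Real.sqrt γ = (1 - lam) * (lam * E) := by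
    rw [hsqα, hsqγ, hβdef, hEdef]; ring
  set N : ℝ := 2 * α * a + β + 2 * Real.sqrt α * Real.sqrt (α * a ^ 2 + β * a + γ) with hNdef
  clear_value N
  have hQ0 : 0 ≤ Real.sqrt (α * a ^ 2 + β * a + γ) := Real.sqrt_nonneg _
  have hsα0 : 0 ≤ Real.sqrt α := Real.sqrt_nonneg _
  have hNlo : A * a / 2 ≤ N := by
    have h1 : 0 ≤ 2 * Real.sqrt α * Real.sqrt (α * a ^ 2 + β * a + γ) :=
      mul_nonneg (by linarith) hQ0
    have h2 : A * a / 2 ≤ 2 * α * a := by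
      rw [hαdef]
      have h := mul_nonneg hsq1 (mul_pos hA ha).le
      linarith [h]
    rw [hNdef]; linarith
  have hNup : N ≤ Nhi := by
    have h1 : 2 * α * a ≤ 2 * A * a := by
      rw [hαdef]
      have h := mul_nonneg hsq2 (mul_pos hA ha).le
      linarith [h]
    have h2 : β ≤ B / 2 := by
      rw [hβdef]
      have h := mul_nonneg (by linarith [hll] : (0:ℝ) ≤ 1/2 - (1-lam)*lam) hB.le
      linarith [h]
    have h3 : Real.sqrt (α * a ^ 2 + β * a + γ) ≤ Real.sqrt (A * a ^ 2 + B * a / 2 + 1 / 2) := by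
      apply Real.sqrt_le_sqrt
      have hβa : β * a ≤ B * a / 2 := by
        have h := mul_nonneg (by linarith [h2] : (0:ℝ) ≤ B/2 - β) ha.le
        linarith [h]
      have hαa : α * a ^ 2 ≤ A * a ^ 2 := by
        rw [hαdef]
        have h := mul_nonneg hsq2 (mul_nonneg hA.le (sq_nonneg a))
        linarith [h]
      have hγ2 : γ ≤ 1 / 2 := by
        rw [hγdef]
        have h := mul_le_mul hε2.le hε2.le hε.le (by norm_num : (0:ℝ) ≤ 1/2)
        linarith [h]
      linarith
    have h4 : Real.sqrt α ≤ Real.sqrt A := by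
      rw [hsqα]
      have h := mul_nonneg (by linarith : (0:ℝ) ≤ 1 - lam) hsA.le
      linarith [h]
    have h5 : 2 * Real.sqrt α * Real.sqrt (α * a ^ 2 + β * a + γ)
        ≤ 2 * Real.sqrt A * Real.sqrt (A * a ^ 2 + B * a / 2 + 1 / 2) := by
      have := mul_le_mul h4 h3 hQ0 hsA.le
      linarith
    rw [hNdef, hNhidef]; linarith
  have hN : 0 < N := lt_of_lt_of_le (by linarith [mul_pos hA ha]) hNlo
  -- split logs
  rw [hden, Real.log_mul hε.ne' (mul_pos hlam0 hE).ne', Real.log_mul hlam0.ne' hE.ne']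
  -- the expression equals K * (log N - log lam - log E)
  have hexp : lam * c₂ / Real.sqrt 2 *
        ((Real.sqrt α)⁻¹ * (Real.log N - (Real.log (1 - lam) + (Real.log lam + Real.log E))))
      + K * Real.log (1 - lam)
      = K * (Real.log N - Real.log lam - Real.log E) := by
    rw [hsqα, hKdef]
    field_simp
    ring
  rw [hexp]
  -- bounds
  have hAa : (0:ℝ) < A * a / 2 := by linarith [mul_pos hA ha]
  have hlogN1 : Real.log (A * a / 2) ≤ Real.log N := Real.log_le_log hAa hNlo
  have hlogN2 : Real.log N ≤ Real.log Nhi := Real.log_le_log hN hNup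
  have hloglam1 : Real.log lam < 0 := Real.log_neg hlam0 hl2
  have hloglam2 : -Real.log 2 ≤ Real.log lam := by
    have h := Real.log_le_log (by norm_num : (0:ℝ) < 1/2) hl1.le
    rw [show (1:ℝ)/2 = 2⁻¹ by norm_num, Real.log_inv] at h
    linarith
  have hx1 : m ≤ Real.log N - Real.log lam - Real.log E := by
    rw [hmdef]; linarith
  have hx2 : Real.log N - Real.log lam - Real.log E ≤ M := by
    rw [hMdef]; linarith
  have habs : |Real.log N - Real.log lam - Real.log E| ≤ |M| + |m| := by
    rw [abs_le]
    refine ⟨?_, ?_⟩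
    · have h1 : -|m| ≤ m := neg_abs_le m
      have h2 : (0:ℝ) ≤ |M| := abs_nonneg M
      linarith
    · have h1 : M ≤ |M| := le_abs_self M
      have h2 : (0:ℝ) ≤ |m| := abs_nonneg m
      linarith
  calc |K * (Real.log N - Real.log lam - Real.log E)|
      = K * |Real.log N - Real.log lam - Real.log E| := by
        rw [abs_mul, abs_of_pos hK]
    _ ≤ K * (|M| + |m|) := mul_le_mul_of_nonneg_left habs hK.le
    _ ≤ K * (|M| + |m|) + 1 := by linarith
end
end
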